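/- For every n ≥ 1, ∑_{0≤k≤n} C(n,k) |n - 2k| = 2·n! / (⌊n/2⌋! · (⌈n/2⌉ - 1)!). -/

import Mathlib

/-!
Write `n = N + 1`. By Pascal's rule and `(k + 1) C(N+1, k+1) = (N + 1) C(N, k)`, the signed terms
`C(N+1, k) (N + 1 - 2k)` telescope, with partial sums `(N + 1) C(N, m)`; over the full range they
sum to `0`. The signed terms are nonnegative exactly for `k ≤ N / 2`, so the sum of their absolute
values is twice the partial sum up to `N / 2`, that is
`2 (N + 1) C(N, N / 2) = 2 (N + 1)! / (⌈N / 2⌉! ⌊N / 2⌋!)`.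
-/

open Finset

theorem Finset.sum_range_abs_eq_two_nsmul_of_sum_eq_zero {α : Type*} [AddCommGroup α]
    [LinearOrder α] [IsOrderedAddMonoid α] {f : ℕ → α} {m N : ℕ} (hmN : m ≤ N)
    (h_nonneg : ∀ k ≤ m, 0 ≤ f k) (h_nonpos : ∀ k, m < k → f k ≤ 0)
    (h_sum : ∑ k ∈ range (N + 1), f k = 0) :
    ∑ k ∈ range (N + 1), |f k| = 2 • ∑ k ∈ range (m + 1), f k := by
  have h_split (g : ℕ → α) : ∑ k ∈ range (N + 1), g k =
      ∑ k ∈ range (m + 1), g k + ∑ k ∈ Ico (m + 1) (N + 1), g k :=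
    (sum_range_add_sum_Ico g (by omega)).symm
  have h_head : ∑ k ∈ range (m + 1), |f k| = ∑ k ∈ range (m + 1), f k :=
    sum_congr rfl fun k hk => abs_of_nonneg (h_nonneg k (by simp at hk; omega))
  have h_tail : ∑ k ∈ Ico (m + 1) (N + 1), |f k| = -∑ k ∈ Ico (m + 1) (N + 1), f k := by
    rw [← sum_neg_distrib]
    exact sum_congr rfl fun k hk => abs_of_nonpos (h_nonpos k (by simp at hk; omega))
  rw [h_split, h_head, h_tail, two_nsmul]
  rw [h_split] at h_sum
  rw [eq_neg_of_add_eq_zero_right h_sum, neg_neg]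

namespace Nat

theorem choose_succ_succ_mul_sub_two_mul {R : Type*} [CommRing R] (N k : ℕ) :
    ((N + 1).choose (k + 1) : R) * ((N + 1 : ℕ) - 2 * (k + 1 : ℕ)) =
      (N + 1 : ℕ) * (N.choose (k + 1) - N.choose k) := by
  have h_pascal : ((N + 1).choose (k + 1) : R) = N.choose k + N.choose (k + 1) := by
    rw [choose_succ_succ', cast_add]
  have h_absorb : ((N + 1 : ℕ) : R) * N.choose k = (N + 1).choose (k + 1) * (k + 1 : ℕ) := by
    rw [← cast_mul, add_one_mul_choose_eq, cast_mul]
  linear_combination ((N + 1 : ℕ) : R) * h_pascal + 2 * h_absorb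

theorem sum_range_choose_mul_sub_two_mul {R : Type*} [CommRing R] (N m : ℕ) :
    ∑ k ∈ range (m + 1), ((N + 1).choose k : R) * ((N + 1 : ℕ) - 2 * k) =
      (N + 1 : ℕ) * N.choose m := by
  induction m with
  | zero => simp
  | succ m ih =>
    rw [sum_range_succ, ih, choose_succ_succ_mul_sub_two_mul]
    ring

theorem sum_range_choose_mul_abs_sub_two_mul {R : Type*} [CommRing R] [LinearOrder R]
    [IsStrictOrderedRing R] (N : ℕ) :
    ∑ k ∈ range (N + 1 + 1), ((N + 1).choose k : R) * |((N + 1 : ℕ) : R) - 2 * k| =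
      2 * (N + 1 : ℕ) * N.choose (N / 2) := by
  have h_term (k : ℕ) : ((N + 1).choose k : R) * |((N + 1 : ℕ) : R) - 2 * k| =
      |((N + 1).choose k : R) * ((N + 1 : ℕ) - 2 * k)| := by
    rw [abs_mul, abs_cast]
  simp_rw [h_term]
  rw [sum_range_abs_eq_two_nsmul_of_sum_eq_zero (N := N + 1) (m := N / 2) (by omega),
    sum_range_choose_mul_sub_two_mul, nsmul_eq_mul, cast_ofNat, mul_assoc]
  · exact fun k hk => mul_nonneg (cast_nonneg _) <| sub_nonneg.2 <|
      by exact_mod_cast (by omega)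
  · exact fun k hk => mul_nonpos_of_nonneg_of_nonpos (cast_nonneg _) <| sub_nonpos.2 <|
      by exact_mod_cast (by omega)
  · rw [sum_range_choose_mul_sub_two_mul, choose_succ_self, cast_zero, mul_zero]

end Nat

theorem binomial_abs_diff_sum (n : ℕ) (hn : 1 ≤ n) :
    (∑ k ∈ Finset.range (n + 1), (n.choose k : ℝ) * |(n : ℝ) - 2 * k|) =
      2 * (n.factorial : ℝ) / ((n / 2).factorial * ((n + 1) / 2 - 1).factorial) := by
  obtain ⟨N, rfl⟩ := Nat.exists_eq_add_of_le' hn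
  rw [Nat.sum_range_choose_mul_abs_sub_two_mul, Nat.cast_choose ℝ (Nat.div_le_self N 2),
    show N - N / 2 = (N + 1) / 2 by omega, show (N + 1 + 1) / 2 - 1 = N / 2 by omega,
    Nat.factorial_succ]
  push_cast
  field_simp
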